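/- Let q be a real number with q ≥ 2, let z > 0 and t ∈ [0,1). If the cubic polynomial P_{z,t,q}(w) = z·((q−2)tw + t + w)² − w·((q−1)tw + 1)² in the variable w has a triple root (equivalently, the renormalization map R_{z,t,q} has a triple fixed point), then t = t₂(q) = (q − 2 + √(q² + 32q − 32))/(18(q − 1)). -/

import Mathlib

/-!
Write `a = 1 + (q - 2) t` and `b = (q - 1) t`, so that
`P = -b² X³ + (z a² - 2b) X² + (2zat - 1) X + z t²`.
A triple root `w` forces `P = -b² (X - w)³`, i.e. `z a² - 2b = 3b²w`, `2zat - 1 = -3b²w²` and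
`z t² = b²w³`. Eliminating `z` through `(2zat)² = 4 (z a²)(z t²)` leaves `(u + 1)³ (3u - 1) = 0`
for `u = bw`, and positivity of `z t²` forces `u = 1/3`. Then `3zat = 1` and `27bzt² = 1` give
`a = 9bt`, i.e. `9(q - 1)t² - (q - 2)t - 1 = 0`, whose positive root is `t₂(q)`.
-/

noncomputable section

open Polynomial

/-- `t₂(q) = (q − 2 + √(q² + 32q − 32))/(18(q − 1))`. -/
def tTwo (q : ℝ) : ℝ := (q - 2 + Real.sqrt (q ^ 2 + 32 * q - 32)) / (18 * (q - 1))

/-- The cubic polynomial `P_{z,t,q}(w) = z((q−2)tw + t + w)² − w((q−1)tw + 1)²`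
obtained from the fixed-point equation `R_{z,t,q}(w) = w` by clearing denominators. -/
def Ppoly (z t q : ℝ) : Polynomial ℝ :=
  C z * (C ((q - 2) * t) * X + C t + X) ^ 2 - X * (C ((q - 1) * t) * X + C 1) ^ 2

theorem Ppoly_relations_of_three_le_rootMultiplicity {z t q w : ℝ}
    (hw : 3 ≤ (Ppoly z t q).rootMultiplicity w) :
    z * (1 + (q - 2) * t) ^ 2 - 2 * ((q - 1) * t) = 3 * ((q - 1) * t) ^ 2 * w ∧
    2 * z * (1 + (q - 2) * t) * t - 1 = -3 * ((q - 1) * t) ^ 2 * w ^ 2 ∧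
    z * t ^ 2 = ((q - 1) * t) ^ 2 * w ^ 3 := by
  have hroot (n : ℕ) (hn : n < 3) : (derivative^[n] (Ppoly z t q)).eval w = 0 :=
    (isRoot_iterate_derivative_of_lt_rootMultiplicity (hn.trans_le hw)).eq_zero
  have h0 := hroot 0 (by norm_num)
  have h1 := hroot 1 (by norm_num)
  have h2 := hroot 2 (by norm_num)
  simp only [Ppoly, map_mul, map_sub, map_one, iterate_map_sub, iterate_derivative_C_mul,
    Function.iterate_zero, Function.iterate_succ, Function.comp_apply, id_eq, eval_sub, eval_mul,
    eval_C, eval_pow, eval_add, eval_X, eval_one, derivative_mul, derivative_C, derivative_pow,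
    derivative_add, derivative_X, derivative_one, Nat.cast_ofNat, Nat.add_one_sub_one, pow_one,
    sub_self, zero_mul, mul_zero, add_zero, mul_one, zero_add, one_mul] at h0 h1 h2
  refine ⟨?_, ?_, ?_⟩
  · linear_combination h2 / 2
  · linear_combination h1 - w * h2
  · linear_combination h0 - w * h1 + w ^ 2 / 2 * h2

theorem eq_nine_mul_of_triple_root_relations {a b t z w : ℝ} (hz : 0 < z) (ht : t ≠ 0)
    (hb : 0 < b) (h2 : z * a ^ 2 - 2 * b = 3 * b ^ 2 * w)
    (h1 : 2 * z * a * t - 1 = -3 * b ^ 2 * w ^ 2) (h0 : z * t ^ 2 = b ^ 2 * w ^ 3) :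
    a = 9 * b * t := by
  have hquartic : (b * w + 1) ^ 3 * (3 * (b * w) - 1) = 0 := by
    linear_combination (-4 * b ^ 2 * w ^ 3) * h2 - 4 * z * a ^ 2 * h0
      + (2 * z * a * t + 1 - 3 * b ^ 2 * w ^ 2) * h1
  have hw : 0 < w := by
    have : 0 < b ^ 2 * w ^ 3 := h0 ▸ by positivity
    exact Odd.pow_pos_iff (by decide) |>.mp (pos_of_mul_pos_right this (by positivity))
  have hu : 3 * (b * w) = 1 := by
    have : (b * w + 1) ^ 3 ≠ 0 := by positivity
    linarith [(mul_eq_zero.mp hquartic).resolve_left this]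
  have hzat : 3 * z * a * t = 1 := by
    linear_combination 3 / 2 * h1 - (3 * (b * w) + 1) / 2 * hu
  have hzt : 27 * b * z * t ^ 2 = 1 := by
    linear_combination 27 * b * h0 + (9 * (b * w) ^ 2 + 3 * (b * w) + 1) * hu
  linear_combination -a * hzt + 9 * b * t * hzat

theorem eq_tTwo_of_quadratic {q t : ℝ} (hq : 1 < q) (ht : 0 < t)
    (h : 1 + (q - 2) * t = 9 * (q - 1) * t ^ 2) : t = tTwo q := by
  have hq1 : 0 < q - 1 := sub_pos.mpr hq
  set r := 18 * (q - 1) * t - (q - 2) with hr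
  have hr_pos : 0 < r := by
    have : t * r = 9 * (q - 1) * t ^ 2 + 1 := by linear_combination -h
    exact pos_of_mul_pos_right (this ▸ by positivity) ht.le
  have hsqrt : Real.sqrt (q ^ 2 + 32 * q - 32) = r := by
    rw [← Real.sqrt_sq hr_pos.le]
    congr 1
    linear_combination 36 * (q - 1) * h
  rw [tTwo, hsqrt, hr]
  field_simp
  ring

theorem triple_fixed_point_implies_t_eq_tTwo_general
    (q : ℝ) (hq : 2 ≤ q) (z : ℝ) (hz : 0 < z) (t : ℝ) (ht0 : 0 ≤ t)
    (htriple : ∃ w : ℝ, 3 ≤ (Ppoly z t q).rootMultiplicity w) :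
    t = tTwo q := by
  obtain ⟨w, hw⟩ := htriple
  obtain ⟨h2, h1, h0⟩ := Ppoly_relations_of_three_le_rootMultiplicity hw
  have ht : t ≠ 0 := by
    rintro rfl
    exact hz.ne' (by simpa using h2)
  have htpos : 0 < t := ht0.lt_of_ne' ht
  have hb : 0 < (q - 1) * t := mul_pos (by linarith) htpos
  refine eq_tTwo_of_quadratic (by linarith) htpos ?_
  rw [eq_nine_mul_of_triple_root_relations hz ht hb h2 h1 h0]
  ring

/-- **Lemma (triple fixed point).**  Let `q ≥ 2` be real, `z > 0`, and `t ∈ [0,1)`.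
If the cubic `P_{z,t,q}` has a root of multiplicity three (equivalently, the
renormalization map `R_{z,t,q}` has a triple fixed point), then
`t = t₂(q) = (q − 2 + √(q² + 32q − 32))/(18(q − 1))`. -/
theorem triple_fixed_point_implies_t_eq_tTwo
    (q : ℝ) (hq : 2 ≤ q) (z : ℝ) (hz : 0 < z) (t : ℝ) (ht0 : 0 ≤ t) (ht1 : t < 1)
    (htriple : ∃ w : ℝ, 3 ≤ (Ppoly z t q).rootMultiplicity w) :
    t = tTwo q :=
  triple_fixed_point_implies_t_eq_tTwo_general q hq z hz t ht0 htriple
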